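/- arXiv:math/0210460 — 2 statements merged into one kernel-verified Lean document; each statement's English description precedes it below -/
import Mathlib

section
/- Let C be a right H-module coalgebra, B = C/CH⁺, β : C ⊗ H → C □_B C the canonical map β(c ⊗ h) = c₁ ⊗ c₂·h, and β' : C ⊗ H → C □_B C defined by β'(c ⊗ h) = c₁·h ⊗ c₂. If the antipode S of H is bijective, then β is bijective (respectively injective, surjective) if and only if β' is bijective (respectively injective, surjective). In fact β' = β ∘ φ where φ(c ⊗ h) = c·h₁ ⊗ S(h₂) is a bijection of C ⊗ H with inverse φ^{-1}(c ⊗ h) = c·h₂ ⊗ S̄(h₁). -/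
open TensorProduct LinearMap Coalgebra

noncomputable section

variable (k : Type) [Field k]
variable (H : Type) [Ring H] [HopfAlgebra k H]
variable (C : Type) [AddCommGroup C] [Module k C] [Coalgebra k C]

namespace TwistPaper

/-- The convolution-type product on `Hom(C, H ⊗ C)`:
`(τ * ν)(c) = (m_H ⊗ id_C)((id_H ⊗ ν)(τ c))`. -/
def convT (τ ν : C →ₗ[k] H ⊗[k] C) : C →ₗ[k] H ⊗[k] C :=
  TensorProduct.map (LinearMap.mul' k H) LinearMap.id
    ∘ₗ (TensorProduct.assoc k H H C).symm.toLinearMap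
    ∘ₗ TensorProduct.map LinearMap.id ν ∘ₗ τ

/-- The unit `σ(c) = 1 ⊗ c`. -/
def sigmaT : C →ₗ[k] H ⊗[k] C := TensorProduct.mk k H C 1

/-- `C` is a right `H`-module coalgebra via the action `act : C ⊗ H → C`. -/
def IsModuleCoalg (act : C ⊗[k] H →ₗ[k] C) : Prop :=
  (∀ c : C, act (c ⊗ₜ (1 : H)) = c) ∧
  (∀ (c : C) (g h : H), act (act (c ⊗ₜ g) ⊗ₜ h) = act (c ⊗ₜ (g * h))) ∧
  (Coalgebra.comul ∘ₗ act
    = TensorProduct.map act act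
      ∘ₗ (TensorProduct.tensorTensorTensorComm k C C H H).toLinearMap
      ∘ₗ TensorProduct.map Coalgebra.comul Coalgebra.comul) ∧
  ((Coalgebra.counit : C →ₗ[k] k) ∘ₗ act
    = (TensorProduct.lid k k).toLinearMap
      ∘ₗ TensorProduct.map Coalgebra.counit Coalgebra.counit)

variable (act : C ⊗[k] H →ₗ[k] C)

/-- Left-hand side of (6): `c ⊗ h ↦ c₋₁h₁ ⊗ c₀·h₂`. -/
def eq6L (τ : C →ₗ[k] H ⊗[k] C) : C ⊗[k] H →ₗ[k] H ⊗[k] C :=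
  TensorProduct.map (LinearMap.mul' k H) act
    ∘ₗ (TensorProduct.tensorTensorTensorComm k H C H H).toLinearMap
    ∘ₗ TensorProduct.map τ Coalgebra.comul

/-- Right-hand side of (6): `c ⊗ h ↦ h₁(c·h₂)₋₁ ⊗ (c·h₂)₀`. -/
def eq6R (τ : C →ₗ[k] H ⊗[k] C) : C ⊗[k] H →ₗ[k] H ⊗[k] C :=
  TensorProduct.map (LinearMap.mul' k H) LinearMap.id
    ∘ₗ (TensorProduct.assoc k H H C).symm.toLinearMap
    ∘ₗ TensorProduct.map LinearMap.id (τ ∘ₗ act)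
    ∘ₗ (TensorProduct.leftComm k C H H).toLinearMap
    ∘ₗ TensorProduct.map LinearMap.id Coalgebra.comul

/-- The twisted comultiplication `Δ_τ(c) = c₁·c₂₋₁ ⊗ c₂₀`. -/
def DeltaT (τ : C →ₗ[k] H ⊗[k] C) : C →ₗ[k] C ⊗[k] C :=
  TensorProduct.map act LinearMap.id
    ∘ₗ (TensorProduct.assoc k C H C).symm.toLinearMap
    ∘ₗ TensorProduct.map LinearMap.id τ ∘ₗ Coalgebra.comul

/-- Left-hand side of (7). -/
def eq7L (τ : C →ₗ[k] H ⊗[k] C) : C →ₗ[k] H ⊗[k] (C ⊗[k] C) :=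
  TensorProduct.map LinearMap.id (DeltaT k H C act τ) ∘ₗ τ

/-- Right-hand side of (7). -/
def eq7R (τ : C →ₗ[k] H ⊗[k] C) : C →ₗ[k] H ⊗[k] (C ⊗[k] C) :=
  (TensorProduct.assoc k H C C).toLinearMap
    ∘ₗ TensorProduct.map
        (TensorProduct.map (LinearMap.mul' k H) act
          ∘ₗ (TensorProduct.tensorTensorTensorComm k H C H H).toLinearMap)
        LinearMap.id
    ∘ₗ (TensorProduct.assoc k (H ⊗[k] C) (H ⊗[k] H) C).symm.toLinearMap
    ∘ₗ TensorProduct.map LinearMap.id (TensorProduct.map Coalgebra.comul LinearMap.id)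
    ∘ₗ TensorProduct.map τ τ ∘ₗ Coalgebra.comul

/-- `τ : C → H ⊗ C` is a twisting of the right `H`-module coalgebra `(C, act)`. -/
def IsTwisting (τ : C →ₗ[k] H ⊗[k] C) : Prop :=
  ((TensorProduct.rid k H).toLinearMap ∘ₗ TensorProduct.map LinearMap.id Coalgebra.counit ∘ₗ τ
    = Algebra.linearMap k H ∘ₗ Coalgebra.counit) ∧
  ((TensorProduct.lid k C).toLinearMap ∘ₗ TensorProduct.map Coalgebra.counit LinearMap.id ∘ₗ τ
    = LinearMap.id) ∧
  (eq6L k H C act τ = eq6R k H C act τ) ∧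
  (eq7L k H C act τ = eq7R k H C act τ)

end TwistPaper

namespace TwistPaper

variable (act : C ⊗[k] H →ₗ[k] C)

/-- The coideal `I = CH⁺`, spanned by the elements `c·h − ε(h)c`. -/
def idealI : Submodule k C :=
  Submodule.span k {x : C | ∃ (c : C) (h : H), x = act (c ⊗ₜ h) - ((Coalgebra.counit : H →ₗ[k] k) h) • c}

/-- The quotient map `π : C → B = C/CH⁺`. -/
def piB : C →ₗ[k] C ⧸ idealI k H C act := (idealI k H C act).mkQ

/-- The map `C ⊗ C → C ⊗ B ⊗ C` whose kernel is the cotensor product `C □_B C`,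
for the comultiplication `Δc` (and the quotient `B` of `C` by `CH⁺`). -/
def cotDiff (Δc : C →ₗ[k] C ⊗[k] C) :
    C ⊗[k] C →ₗ[k] C ⊗[k] ((C ⧸ idealI k H C act) ⊗[k] C) :=
  ((TensorProduct.assoc k C (C ⧸ idealI k H C act) C).toLinearMap
    ∘ₗ TensorProduct.map (TensorProduct.map LinearMap.id (piB k H C act) ∘ₗ Δc) LinearMap.id)
  - TensorProduct.map LinearMap.id (TensorProduct.map (piB k H C act) LinearMap.id ∘ₗ Δc)

/-- The cotensor product `C □_B C ⊆ C ⊗ C`. -/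
def cotensor (Δc : C →ₗ[k] C ⊗[k] C) : Submodule k (C ⊗[k] C) :=
  LinearMap.ker (cotDiff k H C act Δc)

/-- The canonical map `β(c ⊗ h) = c₁ ⊗ c₂·h`. -/
def betaMap : C ⊗[k] H →ₗ[k] C ⊗[k] C :=
  TensorProduct.map LinearMap.id act
    ∘ₗ (TensorProduct.assoc k C C H).toLinearMap
    ∘ₗ TensorProduct.map Coalgebra.comul LinearMap.id

/-- The map `β'(c ⊗ h) = c₁·h ⊗ c₂`. -/
def betaMap' : C ⊗[k] H →ₗ[k] C ⊗[k] C :=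
  TensorProduct.map act LinearMap.id
    ∘ₗ (TensorProduct.comm k C (C ⊗[k] H)).toLinearMap
    ∘ₗ (TensorProduct.assoc k C C H).toLinearMap
    ∘ₗ TensorProduct.map ((TensorProduct.comm k C C).toLinearMap ∘ₗ Coalgebra.comul) LinearMap.id

/-- `φ(c ⊗ h) = c·h₁ ⊗ S(h₂)`. -/
def phiS : C ⊗[k] H →ₗ[k] C ⊗[k] H :=
  TensorProduct.map act (HopfAlgebra.antipode k : H →ₗ[k] H)
    ∘ₗ (TensorProduct.assoc k C H H).symm.toLinearMap
    ∘ₗ TensorProduct.map LinearMap.id Coalgebra.comul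

/-- `φ⁻¹(c ⊗ h) = c·h₂ ⊗ S̄(h₁)`. -/
def phiSInv (Sb : H →ₗ[k] H) : C ⊗[k] H →ₗ[k] C ⊗[k] H :=
  TensorProduct.map act Sb
    ∘ₗ (TensorProduct.assoc k C H H).symm.toLinearMap
    ∘ₗ TensorProduct.map LinearMap.id
        ((TensorProduct.comm k H H).toLinearMap ∘ₗ Coalgebra.comul)

end TwistPaper

namespace TwistHelper
variable {k : Type} [Field k]

section CoalgHelpers
variable {A : Type} [AddCommGroup A] [Module k A] [Coalgebra k A]

lemma sum_counit_smul {a : A} {ι : Type*} (r : Coalgebra.Repr k a ι) :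
    ∑ i ∈ r.index, Coalgebra.counit (R := k) (r.left i) • r.right i = a := by
  have h := Coalgebra.sum_counit_tmul_eq r
  apply_fun (TensorProduct.lid k A) at h
  simpa only [map_sum, lid_tmul, one_smul] using h

lemma sum_smul_counit {a : A} {ι : Type*} (r : Coalgebra.Repr k a ι) :
    ∑ i ∈ r.index, Coalgebra.counit (R := k) (r.right i) • r.left i = a := by
  have h := Coalgebra.sum_tmul_counit_eq r
  apply_fun (TensorProduct.rid k A) at h
  simpa only [map_sum, rid_tmul, one_smul] using h

lemma sum_counit_smul_map {N : Type} [AddCommGroup N] [Module k N]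
    (f : A →ₗ[k] N) {a : A} {ι : Type*} (r : Coalgebra.Repr k a ι) :
    ∑ i ∈ r.index, Coalgebra.counit (R := k) (r.left i) • f (r.right i) = f a := by
  simp only [← map_smul, ← map_sum]
  rw [sum_counit_smul r]

lemma sum_smul_counit_map {N : Type} [AddCommGroup N] [Module k N]
    (f : A →ₗ[k] N) {a : A} {ι : Type*} (r : Coalgebra.Repr k a ι) :
    ∑ i ∈ r.index, Coalgebra.counit (R := k) (r.right i) • f (r.left i) = f a := by
  simp only [← map_smul, ← map_sum]
  rw [sum_smul_counit r]

end CoalgHelpers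

variable {H : Type} [Ring H] [HopfAlgebra k H]

local notation "S" => (HopfAlgebra.antipode k : H →ₗ[k] H)

/-- Convolution on `Hom(H, H ⊗ H)`. -/
def conv (α β : H →ₗ[k] H ⊗[k] H) : H →ₗ[k] H ⊗[k] H :=
  LinearMap.mul' k (H ⊗[k] H) ∘ₗ TensorProduct.map α β ∘ₗ (Coalgebra.comul : H →ₗ[k] H ⊗[k] H)

/-- The convolution unit. -/
def cunit : H →ₗ[k] H ⊗[k] H :=
  Algebra.linearMap k (H ⊗[k] H) ∘ₗ (Coalgebra.counit : H →ₗ[k] k)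

lemma conv_repr (α β : H →ₗ[k] H ⊗[k] H) {a : H} {ι : Type*} (r : Coalgebra.Repr k a ι) :
    conv α β a = ∑ i ∈ r.index, α (r.left i) * β (r.right i) := by
  simp only [conv, LinearMap.comp_apply, ← r.eq, map_sum, TensorProduct.map_tmul,
    LinearMap.mul'_apply]

lemma cunit_apply (a : H) :
    (cunit : H →ₗ[k] H ⊗[k] H) a = Coalgebra.counit (R := k) a • 1 := by
  simp [cunit, Algebra.algebraMap_eq_smul_one]

lemma conv_cunit_left (β : H →ₗ[k] H ⊗[k] H) : conv cunit β = β := by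
  ext a
  rw [conv_repr _ _ (ℛ k a)]
  simp only [cunit_apply, smul_mul_assoc, one_mul]
  exact sum_counit_smul_map β (ℛ k a)

lemma conv_cunit_right (α : H →ₗ[k] H ⊗[k] H) : conv α cunit = α := by
  ext a
  rw [conv_repr _ _ (ℛ k a)]
  simp only [cunit_apply, mul_smul_comm, mul_one]
  exact sum_smul_counit_map α (ℛ k a)

lemma conv_assoc (f g w : H →ₗ[k] H ⊗[k] H) :
    conv (conv f g) w = conv f (conv g w) := by
  ext a
  set r := ℛ k a with hr
  have key := Coalgebra.sum_tmul_tmul_eq r (fun i => ℛ k (r.left i)) (fun i => ℛ k (r.right i))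
  set T : H ⊗[k] (H ⊗[k] H) →ₗ[k] H ⊗[k] H :=
    LinearMap.mul' k (H ⊗[k] H) ∘ₗ
      TensorProduct.map f (LinearMap.mul' k (H ⊗[k] H) ∘ₗ TensorProduct.map g w) with hT
  have hTt : ∀ x y z : H, T (x ⊗ₜ (y ⊗ₜ z)) = f x * (g y * w z) := by
    intro x y z; simp [hT]
  have key2 := congrArg T key
  simp only [map_sum, hTt] at key2
  rw [conv_repr _ _ r, conv_repr _ _ r]
  calc ∑ i ∈ r.index, conv f g (r.left i) * w (r.right i)
      = ∑ i ∈ r.index, ∑ j ∈ (ℛ k (r.left i)).index,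
          f ((ℛ k (r.left i)).left j) * (g ((ℛ k (r.left i)).right j) * w (r.right i)) := by
        refine Finset.sum_congr rfl fun i _ => ?_
        rw [conv_repr _ _ (ℛ k (r.left i)), Finset.sum_mul]
        exact Finset.sum_congr rfl fun j _ => mul_assoc _ _ _
    _ = ∑ i ∈ r.index, ∑ j ∈ (ℛ k (r.right i)).index,
          f (r.left i) * (g ((ℛ k (r.right i)).left j) * w ((ℛ k (r.right i)).right j)) := key2
    _ = ∑ i ∈ r.index, f (r.left i) * conv g w (r.right i) := by
        refine Finset.sum_congr rfl fun i _ => ?_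
        rw [conv_repr _ _ (ℛ k (r.right i)), Finset.mul_sum]


/-- `ν = τ ∘ (S ⊗ S) ∘ Δ`. -/
def nuMap : H →ₗ[k] H ⊗[k] H :=
  (TensorProduct.comm k H H).toLinearMap ∘ₗ TensorProduct.map S S
    ∘ₗ (Coalgebra.comul : H →ₗ[k] H ⊗[k] H)

lemma nuMap_repr {x : H} {ι : Type*} (r : Coalgebra.Repr k x ι) :
    (nuMap : H →ₗ[k] H ⊗[k] H) x = ∑ i ∈ r.index, S (r.right i) ⊗ₜ[k] S (r.left i) := by
  simp only [nuMap, LinearMap.comp_apply, ← r.eq, map_sum, TensorProduct.map_tmul,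
    LinearEquiv.coe_coe, TensorProduct.comm_tmul]

lemma convA : conv ((Coalgebra.comul : H →ₗ[k] H ⊗[k] H) ∘ₗ S) Coalgebra.comul = cunit := by
  ext a
  rw [conv_repr _ _ (ℛ k a)]
  calc ∑ i ∈ (ℛ k a).index,
        ((Coalgebra.comul : H →ₗ[k] H ⊗[k] H) ∘ₗ S) ((ℛ k a).left i) *
          Coalgebra.comul ((ℛ k a).right i)
      = Coalgebra.comul (∑ i ∈ (ℛ k a).index, S ((ℛ k a).left i) * (ℛ k a).right i) := by
        rw [map_sum]
        exact Finset.sum_congr rfl fun i _ => by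
          simp [LinearMap.comp_apply, Bialgebra.comul_mul]
    _ = cunit a := by
        rw [HopfAlgebra.sum_antipode_mul_eq_algebraMap_counit (ℛ k a), Bialgebra.comul_algebraMap,
          cunit_apply, Algebra.algebraMap_eq_smul_one]

lemma convB : conv (Coalgebra.comul : H →ₗ[k] H ⊗[k] H) nuMap = cunit := by
  ext a
  set r := ℛ k a with hrdef
  rw [conv_repr _ _ r]
  set rl : ∀ i, Coalgebra.Repr k (r.left i) (H × H) := fun i => ℛ k (r.left i) with hrl
  set rr : ∀ i, Coalgebra.Repr k (r.right i) (H × H) := fun i => ℛ k (r.right i) with hrr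
  -- Step 1: rebracket to `∑ (l i ⊗ rrᵢl j) * ν (rrᵢr j)`
  have key := Coalgebra.sum_tmul_tmul_eq r rl rr
  set T : H ⊗[k] (H ⊗[k] H) →ₗ[k] H ⊗[k] H :=
    LinearMap.mul' k (H ⊗[k] H)
      ∘ₗ TensorProduct.map (LinearMap.id : H ⊗[k] H →ₗ[k] H ⊗[k] H) nuMap
      ∘ₗ (TensorProduct.assoc k H H H).symm.toLinearMap with hT
  have hTt : ∀ x y z : H, T (x ⊗ₜ (y ⊗ₜ z)) = (x ⊗ₜ y) * nuMap z := by
    intro x y z; simp [hT]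
  have key1 := congrArg T key
  simp only [map_sum, hTt] at key1
  calc ∑ i ∈ r.index, Coalgebra.comul (r.left i) * nuMap (r.right i)
      = ∑ i ∈ r.index, ∑ j ∈ (rl i).index,
          ((rl i).left j ⊗ₜ (rl i).right j) * nuMap (r.right i) := by
        refine Finset.sum_congr rfl fun i _ => ?_
        rw [← (rl i).eq, Finset.sum_mul]
    _ = ∑ i ∈ r.index, ∑ j ∈ (rr i).index,
          (r.left i ⊗ₜ (rr i).left j) * nuMap ((rr i).right j) := key1
    _ = ∑ i ∈ r.index, (r.left i * S (r.right i)) ⊗ₜ (1 : H) := by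
        refine Finset.sum_congr rfl fun i _ => ?_
        -- second rebracket, within fixed i
        set c : ∀ j, Coalgebra.Repr k ((rr i).right j) (H × H) := fun j => ℛ k ((rr i).right j) with hc
        set d : ∀ j, Coalgebra.Repr k ((rr i).left j) (H × H) := fun j => ℛ k ((rr i).left j) with hd
        set U : H ⊗[k] (H ⊗[k] H) →ₗ[k] H ⊗[k] H :=
          TensorProduct.map (LinearMap.mulLeft k (r.left i) ∘ₗ S)
              (LinearMap.mul' k H ∘ₗ TensorProduct.map (LinearMap.id : H →ₗ[k] H) S)
            ∘ₗ (TensorProduct.leftComm k H H H).toLinearMap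
            ∘ₗ LinearMap.lTensor H (TensorProduct.comm k H H).toLinearMap with hU
        have hUt : ∀ x y z : H, U (x ⊗ₜ (y ⊗ₜ z)) = (r.left i * S z) ⊗ₜ (x * S y) := by
          intro x y z; simp [hU]
        have key2 := congrArg U (Coalgebra.sum_tmul_tmul_eq (rr i) d c)
        simp only [map_sum, hUt] at key2
        calc ∑ j ∈ (rr i).index, (r.left i ⊗ₜ (rr i).left j) * nuMap ((rr i).right j)
            = ∑ j ∈ (rr i).index, ∑ m ∈ (c j).index,
                (r.left i * S ((c j).right m)) ⊗ₜ ((rr i).left j * S ((c j).left m)) := by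
              refine Finset.sum_congr rfl fun j _ => ?_
              rw [nuMap_repr (c j), Finset.mul_sum]
              exact Finset.sum_congr rfl fun m _ => by
                rw [Algebra.TensorProduct.tmul_mul_tmul]
          _ = ∑ j ∈ (rr i).index, ∑ m ∈ (d j).index,
                (r.left i * S ((rr i).right j)) ⊗ₜ ((d j).left m * S ((d j).right m)) := key2.symm
          _ = ∑ j ∈ (rr i).index, Coalgebra.counit (R := k) ((rr i).left j) •
                ((r.left i * S ((rr i).right j)) ⊗ₜ (1 : H)) := by
              refine Finset.sum_congr rfl fun j _ => ?_
              rw [← TensorProduct.tmul_sum, HopfAlgebra.sum_mul_antipode_eq_smul (d j),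
                TensorProduct.tmul_smul]
          _ = (r.left i * S (r.right i)) ⊗ₜ (1 : H) := by
              exact sum_counit_smul_map
                (((TensorProduct.mk k H H).flip 1) ∘ₗ LinearMap.mulLeft k (r.left i) ∘ₗ S) (rr i)
    _ = cunit a := by
        rw [← TensorProduct.sum_tmul, HopfAlgebra.sum_mul_antipode_eq_smul r, cunit_apply,
          Algebra.TensorProduct.one_def, TensorProduct.smul_tmul']

/-- The antipode is an anti-coalgebra morphism. -/
lemma comul_comp_antipode :
    (Coalgebra.comul : H →ₗ[k] H ⊗[k] H) ∘ₗ S = nuMap := by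
  calc (Coalgebra.comul : H →ₗ[k] H ⊗[k] H) ∘ₗ S
      = conv ((Coalgebra.comul : H →ₗ[k] H ⊗[k] H) ∘ₗ S) cunit := (conv_cunit_right _).symm
    _ = conv ((Coalgebra.comul : H →ₗ[k] H ⊗[k] H) ∘ₗ S) (conv Coalgebra.comul nuMap) := by
        rw [convB]
    _ = conv (conv ((Coalgebra.comul : H →ₗ[k] H ⊗[k] H) ∘ₗ S) Coalgebra.comul) nuMap :=
        (conv_assoc _ _ _).symm
    _ = conv cunit nuMap := by rw [convA]
    _ = nuMap := conv_cunit_left _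

lemma comul_antipode_repr {x : H} {ι : Type*} (r : Coalgebra.Repr k x ι) :
    Coalgebra.comul (R := k) (S x) = ∑ i ∈ r.index, S (r.right i) ⊗ₜ[k] S (r.left i) := by
  have := LinearMap.congr_fun (comul_comp_antipode (k := k) (H := H)) x
  rw [LinearMap.comp_apply] at this
  rw [this, nuMap_repr r]



lemma counit_antipode (h : H) :
    Coalgebra.counit (R := k) (S h) = Coalgebra.counit (R := k) h := by
  set r := ℛ k h with hr
  have h1 := congrArg (Coalgebra.counit : H →ₗ[k] k) (HopfAlgebra.sum_antipode_mul_eq_smul r)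
  simp only [map_sum, map_smul, Bialgebra.counit_mul, Bialgebra.counit_one, smul_eq_mul,
    mul_one] at h1
  rw [← h1]
  have h2 := sum_smul_counit_map ((Coalgebra.counit : H →ₗ[k] k) ∘ₗ S) r
  simp only [LinearMap.comp_apply] at h2
  rw [← h2]
  exact Finset.sum_congr rfl fun i _ => by rw [smul_eq_mul, mul_comm]

variable {Sb : H →ₗ[k] H}

lemma counit_sbar (hSb₂ : (S : H →ₗ[k] H) ∘ₗ Sb = LinearMap.id) (h : H) :
    Coalgebra.counit (R := k) (Sb h) = Coalgebra.counit (R := k) h := by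
  have hSSb : S (Sb h) = h := LinearMap.congr_fun hSb₂ h
  calc Coalgebra.counit (R := k) (Sb h) = Coalgebra.counit (R := k) (S (Sb h)) :=
        (counit_antipode _).symm
    _ = Coalgebra.counit (R := k) h := by rw [hSSb]

lemma comul_sbar_repr (hSb₁ : Sb ∘ₗ S = LinearMap.id)
    (hSb₂ : (S : H →ₗ[k] H) ∘ₗ Sb = LinearMap.id) {x : H} {ι : Type*} (r : Coalgebra.Repr k x ι) :
    Coalgebra.comul (R := k) (Sb x) =
      ∑ i ∈ r.index, Sb (r.right i) ⊗ₜ[k] Sb (r.left i) := by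
  have hSSb : ∀ y : H, S (Sb y) = y := fun y => LinearMap.congr_fun hSb₂ y
  have hmapid : TensorProduct.map Sb Sb ∘ₗ TensorProduct.map (S : H →ₗ[k] H) S
      = (LinearMap.id : H ⊗[k] H →ₗ[k] H ⊗[k] H) := by
    rw [← TensorProduct.map_comp, hSb₁, TensorProduct.map_id]
  have h1 : Coalgebra.comul (R := k) x
      = (TensorProduct.comm k H H)
          (TensorProduct.map S S (Coalgebra.comul (R := k) (Sb x))) := by
    have h0 := LinearMap.congr_fun (comul_comp_antipode (k := k) (H := H)) (Sb x)
    simp only [LinearMap.comp_apply, nuMap, LinearEquiv.coe_coe] at h0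
    conv_lhs => rw [← hSSb x]
    exact h0
  have h2 : Coalgebra.comul (R := k) (Sb x)
      = TensorProduct.map Sb Sb
          ((TensorProduct.comm k H H).symm (Coalgebra.comul (R := k) x)) := by
    rw [h1, LinearEquiv.symm_apply_apply]
    exact (LinearMap.congr_fun hmapid _).symm
  rw [h2, ← r.eq, map_sum, map_sum]
  simp only [TensorProduct.comm_symm_tmul, TensorProduct.map_tmul]

lemma sum_mul_sbar_eq_smul (hSb₁ : Sb ∘ₗ S = LinearMap.id)
    (hSb₂ : (S : H →ₗ[k] H) ∘ₗ Sb = LinearMap.id) {x : H} {ι : Type*} (r : Coalgebra.Repr k x ι) :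
    ∑ i ∈ r.index, r.right i * Sb (r.left i) = Coalgebra.counit (R := k) x • 1 := by
  have hSSb : ∀ y : H, S (Sb y) = y := fun y => LinearMap.congr_fun hSb₂ y
  have hSbS : ∀ y : H, Sb (S y) = y := fun y => LinearMap.congr_fun hSb₁ y
  set T : H →ₗ[k] H :=
    LinearMap.mul' k H ∘ₗ TensorProduct.map (LinearMap.id : H →ₗ[k] H) Sb
      ∘ₗ (TensorProduct.comm k H H).toLinearMap
      ∘ₗ (Coalgebra.comul : H →ₗ[k] H ⊗[k] H) with hT
  have hx : T x = ∑ i ∈ r.index, r.right i * Sb (r.left i) := by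
    simp only [hT, LinearMap.comp_apply, ← r.eq, map_sum, LinearEquiv.coe_coe,
      TensorProduct.comm_tmul, TensorProduct.map_tmul, LinearMap.mul'_apply, LinearMap.id_coe,
      id_eq]
  set ry := ℛ k (Sb x) with hry
  have hy : T x = Coalgebra.counit (R := k) x • 1 := by
    conv_lhs => rw [← hSSb x]
    have hTy : T (S (Sb x)) = ∑ i ∈ ry.index, S (ry.left i) * ry.right i := by
      simp only [hT, LinearMap.comp_apply, comul_antipode_repr ry, map_sum, LinearEquiv.coe_coe,
        TensorProduct.comm_tmul, TensorProduct.map_tmul, LinearMap.mul'_apply, LinearMap.id_coe,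
        id_eq, hSbS]
    rw [hTy, HopfAlgebra.sum_antipode_mul_eq_smul ry, counit_sbar hSb₂]
  rw [← hx, hy]

end TwistHelper

namespace TwistHelper
variable {k : Type} [Field k] {H : Type} [Ring H] [HopfAlgebra k H]
variable {C : Type} [AddCommGroup C] [Module k C] [Coalgebra k C]
variable {act : C ⊗[k] H →ₗ[k] C} {Sb : H →ₗ[k] H}

local notation "S" => (HopfAlgebra.antipode k : H →ₗ[k] H)

lemma comul_act_repr (hact : TwistPaper.IsModuleCoalg k H C act)
    {c : C} {h : H} {ι κ : Type*} (rc : Coalgebra.Repr k c ι) (rh : Coalgebra.Repr k h κ) :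
    Coalgebra.comul (R := k) (act (c ⊗ₜ h))
      = ∑ i ∈ rc.index, ∑ j ∈ rh.index,
          act (rc.left i ⊗ₜ rh.left j) ⊗ₜ[k] act (rc.right i ⊗ₜ rh.right j) := by
  have h0 := LinearMap.congr_fun hact.2.2.1 (c ⊗ₜ[k] h)
  simp only [LinearMap.comp_apply, TensorProduct.map_tmul, LinearEquiv.coe_coe] at h0
  rw [h0, ← rc.eq, ← rh.eq, TensorProduct.sum_tmul]
  simp only [TensorProduct.tmul_sum, TensorProduct.sum_tmul, map_sum,
    TensorProduct.tensorTensorTensorComm_tmul, TensorProduct.map_tmul]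

/-- A `Repr` for `act (c ⊗ₜ h)` built from reprs of `c` and `h`. -/
def actRepr (hact : TwistPaper.IsModuleCoalg k H C act)
    {c : C} {h : H} {ι κ : Type*} (rc : Coalgebra.Repr k c ι) (rh : Coalgebra.Repr k h κ) :
    Coalgebra.Repr k (act (c ⊗ₜ[k] h)) (ι × κ) where
  index := rc.index ×ˢ rh.index
  left := fun p => act (rc.left p.1 ⊗ₜ rh.left p.2)
  right := fun p => act (rc.right p.1 ⊗ₜ rh.right p.2)
  eq := by rw [Finset.sum_product]; exact (comul_act_repr hact rc rh).symm

lemma betaMap_tmul {c : C} {ι : Type*} (rc : Coalgebra.Repr k c ι) (h : H) :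
    TwistPaper.betaMap k H C act (c ⊗ₜ h)
      = ∑ i ∈ rc.index, rc.left i ⊗ₜ[k] act (rc.right i ⊗ₜ h) := by
  simp only [TwistPaper.betaMap, LinearMap.comp_apply, TensorProduct.map_tmul,
    LinearMap.id_coe, id_eq, LinearEquiv.coe_coe]
  rw [← rc.eq, TensorProduct.sum_tmul, map_sum, map_sum]
  simp only [TensorProduct.assoc_tmul, TensorProduct.map_tmul, LinearMap.id_coe, id_eq]

lemma betaMap'_tmul {c : C} {ι : Type*} (rc : Coalgebra.Repr k c ι) (h : H) :
    TwistPaper.betaMap' k H C act (c ⊗ₜ h)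
      = ∑ i ∈ rc.index, act (rc.left i ⊗ₜ h) ⊗ₜ[k] rc.right i := by
  simp only [TwistPaper.betaMap', LinearMap.comp_apply, TensorProduct.map_tmul,
    LinearMap.id_coe, id_eq, LinearEquiv.coe_coe]
  rw [← rc.eq, map_sum, TensorProduct.sum_tmul, map_sum, map_sum, map_sum]
  simp only [TensorProduct.comm_tmul, TensorProduct.assoc_tmul, TensorProduct.map_tmul,
    LinearMap.id_coe, id_eq]

lemma phiS_tmul (c : C) {h : H} {ι : Type*} (rh : Coalgebra.Repr k h ι) :
    TwistPaper.phiS k H C act (c ⊗ₜ h)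
      = ∑ j ∈ rh.index, act (c ⊗ₜ rh.left j) ⊗ₜ[k] S (rh.right j) := by
  simp only [TwistPaper.phiS, LinearMap.comp_apply, TensorProduct.map_tmul,
    LinearMap.id_coe, id_eq, LinearEquiv.coe_coe]
  rw [← rh.eq, TensorProduct.tmul_sum, map_sum, map_sum]
  simp only [TensorProduct.assoc_symm_tmul, TensorProduct.map_tmul]

lemma phiSInv_tmul (c : C) {h : H} {ι : Type*} (rh : Coalgebra.Repr k h ι) :
    TwistPaper.phiSInv k H C act Sb (c ⊗ₜ h)
      = ∑ j ∈ rh.index, act (c ⊗ₜ rh.right j) ⊗ₜ[k] Sb (rh.left j) := by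
  simp only [TwistPaper.phiSInv, LinearMap.comp_apply, TensorProduct.map_tmul,
    LinearMap.id_coe, id_eq, LinearEquiv.coe_coe]
  rw [← rh.eq, map_sum, TensorProduct.tmul_sum, map_sum, map_sum]
  simp only [TensorProduct.comm_tmul, TensorProduct.assoc_symm_tmul, TensorProduct.map_tmul]

end TwistHelper


namespace TwistHelper
variable {k : Type} [Field k] {H : Type} [Ring H] [HopfAlgebra k H]
variable {C : Type} [AddCommGroup C] [Module k C] [Coalgebra k C]
variable {act : C ⊗[k] H →ₗ[k] C} {Sb : H →ₗ[k] H}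

local notation "S" => (HopfAlgebra.antipode k : H →ₗ[k] H)

set_option maxHeartbeats 1000000 in
lemma beta'_eq_beta_comp_phiS (hact : TwistPaper.IsModuleCoalg k H C act) :
    TwistPaper.betaMap' k H C act = TwistPaper.betaMap k H C act ∘ₗ TwistPaper.phiS k H C act := by
  apply TensorProduct.ext'
  intro c h
  set rc := ℛ k c with hrc
  set rh := ℛ k h with hrh
  set a : ∀ j, Coalgebra.Repr k (rh.left j) (H × H) := fun j => ℛ k (rh.left j) with ha
  set b : ∀ j, Coalgebra.Repr k (rh.right j) (H × H) := fun j => ℛ k (rh.right j) with hb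
  rw [LinearMap.comp_apply, phiS_tmul c rh, map_sum, betaMap'_tmul rc h]
  symm
  calc ∑ j ∈ rh.index, TwistPaper.betaMap k H C act (act (c ⊗ₜ rh.left j) ⊗ₜ S (rh.right j))
      = ∑ j ∈ rh.index, ∑ i ∈ rc.index, ∑ m ∈ (a j).index,
          act (rc.left i ⊗ₜ (a j).left m) ⊗ₜ[k]
            act (rc.right i ⊗ₜ ((a j).right m * S (rh.right j))) := by
        refine Finset.sum_congr rfl fun j _ => ?_
        rw [betaMap_tmul (actRepr hact rc (a j)) (S (rh.right j))]
        show ∑ p ∈ rc.index ×ˢ (a j).index, _ = _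
        rw [Finset.sum_product]
        exact Finset.sum_congr rfl fun i _ => Finset.sum_congr rfl fun m _ => by
          simp only [actRepr]
          rw [hact.2.1]
    _ = ∑ i ∈ rc.index, ∑ j ∈ rh.index, ∑ m ∈ (a j).index,
          act (rc.left i ⊗ₜ (a j).left m) ⊗ₜ[k]
            act (rc.right i ⊗ₜ ((a j).right m * S (rh.right j))) := Finset.sum_comm
    _ = ∑ i ∈ rc.index, act (rc.left i ⊗ₜ h) ⊗ₜ[k] rc.right i := by
        refine Finset.sum_congr rfl fun i _ => ?_
        set W : H ⊗[k] (H ⊗[k] H) →ₗ[k] C ⊗[k] C :=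
          TensorProduct.map (act ∘ₗ TensorProduct.mk k C H (rc.left i))
            (act ∘ₗ TensorProduct.mk k C H (rc.right i) ∘ₗ LinearMap.mul' k H
              ∘ₗ TensorProduct.map (LinearMap.id : H →ₗ[k] H) S) with hW
        have hWt : ∀ x y z : H, W (x ⊗ₜ (y ⊗ₜ z))
            = act (rc.left i ⊗ₜ x) ⊗ₜ[k] act (rc.right i ⊗ₜ (y * S z)) := by
          intro x y z; simp [hW]
        have key := congrArg W (Coalgebra.sum_tmul_tmul_eq rh a b)
        simp only [map_sum, hWt] at key
        calc ∑ j ∈ rh.index, ∑ m ∈ (a j).index,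
              act (rc.left i ⊗ₜ (a j).left m) ⊗ₜ[k]
                act (rc.right i ⊗ₜ ((a j).right m * S (rh.right j))) = _ := key
          _ = ∑ j ∈ rh.index, Coalgebra.counit (R := k) (rh.right j) •
                (act (rc.left i ⊗ₜ rh.left j) ⊗ₜ[k] rc.right i) := by
              refine Finset.sum_congr rfl fun j _ => ?_
              set L : H →ₗ[k] C ⊗[k] C :=
                TensorProduct.mk k C C (act (rc.left i ⊗ₜ rh.left j))
                  ∘ₗ act ∘ₗ TensorProduct.mk k C H (rc.right i) with hL
              have hLt : ∀ x : H, L x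
                  = act (rc.left i ⊗ₜ rh.left j) ⊗ₜ[k] act (rc.right i ⊗ₜ x) := by
                intro x; simp [hL]
              calc ∑ m ∈ (b j).index,
                    act (rc.left i ⊗ₜ rh.left j) ⊗ₜ[k]
                      act (rc.right i ⊗ₜ ((b j).left m * S ((b j).right m)))
                  = ∑ m ∈ (b j).index, L ((b j).left m * S ((b j).right m)) := by
                    simp only [hLt]
                _ = L (∑ m ∈ (b j).index, (b j).left m * S ((b j).right m)) := (map_sum L _ _).symm
                _ = Coalgebra.counit (R := k) (rh.right j) •
                      (act (rc.left i ⊗ₜ rh.left j) ⊗ₜ[k] rc.right i) := by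
                    rw [HopfAlgebra.sum_mul_antipode_eq_smul (b j), map_smul, hLt, hact.1]
          _ = act (rc.left i ⊗ₜ h) ⊗ₜ[k] rc.right i := by
              have := sum_smul_counit_map
                (((TensorProduct.mk k C C).flip (rc.right i)) ∘ₗ act
                  ∘ₗ TensorProduct.mk k C H (rc.left i)) rh
              simpa using this

/-- A `Repr` of `S x` from a repr of `x`. -/
def antipodeRepr {x : H} {ι : Type*} (r : Coalgebra.Repr k x ι) : Coalgebra.Repr k ((S : H →ₗ[k] H) x) ι where
  index := r.index
  left := fun i => S (r.right i)
  right := fun i => S (r.left i)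
  eq := (comul_antipode_repr r).symm

/-- A `Repr` of `Sb x` from a repr of `x`. -/
def sbarRepr (hSb₁ : Sb ∘ₗ S = LinearMap.id) (hSb₂ : (S : H →ₗ[k] H) ∘ₗ Sb = LinearMap.id)
    {x : H} {ι : Type*} (r : Coalgebra.Repr k x ι) : Coalgebra.Repr k (Sb x) ι where
  index := r.index
  left := fun i => Sb (r.right i)
  right := fun i => Sb (r.left i)
  eq := (comul_sbar_repr hSb₁ hSb₂ r).symm

set_option maxHeartbeats 1000000 in
lemma phiSInv_comp_phiS (hact : TwistPaper.IsModuleCoalg k H C act)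
    (hSb₁ : Sb ∘ₗ S = LinearMap.id) (hSb₂ : (S : H →ₗ[k] H) ∘ₗ Sb = LinearMap.id) :
    TwistPaper.phiSInv k H C act Sb ∘ₗ TwistPaper.phiS k H C act = LinearMap.id := by
  have hSbS : ∀ y : H, Sb (S y) = y := fun y => LinearMap.congr_fun hSb₁ y
  apply TensorProduct.ext'
  intro c h
  set rh := ℛ k h with hrh
  set a : ∀ j, Coalgebra.Repr k (rh.left j) (H × H) := fun j => ℛ k (rh.left j) with ha
  set b : ∀ j, Coalgebra.Repr k (rh.right j) (H × H) := fun j => ℛ k (rh.right j) with hb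
  rw [LinearMap.comp_apply, LinearMap.id_apply, phiS_tmul c rh, map_sum]
  calc ∑ j ∈ rh.index,
        TwistPaper.phiSInv k H C act Sb (act (c ⊗ₜ rh.left j) ⊗ₜ S (rh.right j))
      = ∑ j ∈ rh.index, ∑ m ∈ (b j).index,
          act (c ⊗ₜ (rh.left j * S ((b j).left m))) ⊗ₜ[k] (b j).right m := by
        refine Finset.sum_congr rfl fun j _ => ?_
        rw [phiSInv_tmul (act (c ⊗ₜ rh.left j)) (antipodeRepr (b j))]
        refine Finset.sum_congr rfl fun m _ => ?_
        simp only [antipodeRepr]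
        rw [hact.2.1, hSbS]
    _ = ∑ j ∈ rh.index, ∑ m ∈ (a j).index,
          act (c ⊗ₜ ((a j).left m * S ((a j).right m))) ⊗ₜ[k] rh.right j := by
        set X : H ⊗[k] (H ⊗[k] H) →ₗ[k] C ⊗[k] H :=
          TensorProduct.map
            (act ∘ₗ TensorProduct.mk k C H c ∘ₗ LinearMap.mul' k H
              ∘ₗ TensorProduct.map (LinearMap.id : H →ₗ[k] H) S)
            (LinearMap.id : H →ₗ[k] H)
            ∘ₗ (TensorProduct.assoc k H H H).symm.toLinearMap with hX
        have hXt : ∀ x y z : H, X (x ⊗ₜ (y ⊗ₜ z))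
            = act (c ⊗ₜ (x * S y)) ⊗ₜ[k] z := by
          intro x y z; simp [hX]
        have key := congrArg X (Coalgebra.sum_tmul_tmul_eq rh a b)
        simp only [map_sum, hXt] at key
        exact key.symm
    _ = ∑ j ∈ rh.index, Coalgebra.counit (R := k) (rh.left j) • (c ⊗ₜ[k] rh.right j) := by
        refine Finset.sum_congr rfl fun j _ => ?_
        set L : H →ₗ[k] C ⊗[k] H :=
          ((TensorProduct.mk k C H).flip (rh.right j)) ∘ₗ act ∘ₗ TensorProduct.mk k C H c with hL
        have hLt : ∀ x : H, L x = act (c ⊗ₜ x) ⊗ₜ[k] rh.right j := by intro x; simp [hL]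
        calc ∑ m ∈ (a j).index, act (c ⊗ₜ ((a j).left m * S ((a j).right m))) ⊗ₜ[k] rh.right j
            = ∑ m ∈ (a j).index, L ((a j).left m * S ((a j).right m)) := by simp only [hLt]
          _ = L (∑ m ∈ (a j).index, (a j).left m * S ((a j).right m)) := (map_sum L _ _).symm
          _ = Coalgebra.counit (R := k) (rh.left j) • (c ⊗ₜ[k] rh.right j) := by
              rw [HopfAlgebra.sum_mul_antipode_eq_smul (a j), map_smul, hLt, hact.1]
    _ = c ⊗ₜ[k] h := by
        have := sum_counit_smul_map (TensorProduct.mk k C H c) rh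
        simpa using this

set_option maxHeartbeats 1000000 in
lemma phiS_comp_phiSInv (hact : TwistPaper.IsModuleCoalg k H C act)
    (hSb₁ : Sb ∘ₗ S = LinearMap.id) (hSb₂ : (S : H →ₗ[k] H) ∘ₗ Sb = LinearMap.id) :
    TwistPaper.phiS k H C act ∘ₗ TwistPaper.phiSInv k H C act Sb = LinearMap.id := by
  have hSSb : ∀ y : H, S (Sb y) = y := fun y => LinearMap.congr_fun hSb₂ y
  apply TensorProduct.ext'
  intro c h
  set rh := ℛ k h with hrh
  set a : ∀ j, Coalgebra.Repr k (rh.left j) (H × H) := fun j => ℛ k (rh.left j) with ha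
  set b : ∀ j, Coalgebra.Repr k (rh.right j) (H × H) := fun j => ℛ k (rh.right j) with hb
  rw [LinearMap.comp_apply, LinearMap.id_apply, phiSInv_tmul c rh, map_sum]
  calc ∑ j ∈ rh.index,
        TwistPaper.phiS k H C act (act (c ⊗ₜ rh.right j) ⊗ₜ Sb (rh.left j))
      = ∑ j ∈ rh.index, ∑ m ∈ (a j).index,
          act (c ⊗ₜ (rh.right j * Sb ((a j).right m))) ⊗ₜ[k] (a j).left m := by
        refine Finset.sum_congr rfl fun j _ => ?_
        rw [phiS_tmul (act (c ⊗ₜ rh.right j)) (sbarRepr hSb₁ hSb₂ (a j))]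
        refine Finset.sum_congr rfl fun m _ => ?_
        simp only [sbarRepr]
        rw [hact.2.1, hSSb]
    _ = ∑ j ∈ rh.index, ∑ m ∈ (b j).index,
          act (c ⊗ₜ ((b j).right m * Sb ((b j).left m))) ⊗ₜ[k] rh.left j := by
        set Y : H ⊗[k] (H ⊗[k] H) →ₗ[k] C ⊗[k] H :=
          TensorProduct.map
            (act ∘ₗ TensorProduct.mk k C H c ∘ₗ LinearMap.mul' k H
              ∘ₗ TensorProduct.map (LinearMap.id : H →ₗ[k] H) Sb
              ∘ₗ (TensorProduct.comm k H H).toLinearMap)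
            (LinearMap.id : H →ₗ[k] H)
            ∘ₗ (TensorProduct.comm k H (H ⊗[k] H)).toLinearMap with hY
        have hYt : ∀ x y z : H, Y (x ⊗ₜ (y ⊗ₜ z))
            = act (c ⊗ₜ (z * Sb y)) ⊗ₜ[k] x := by
          intro x y z; simp [hY]
        have key := congrArg Y (Coalgebra.sum_tmul_tmul_eq rh a b)
        simp only [map_sum, hYt] at key
        exact key
    _ = ∑ j ∈ rh.index, Coalgebra.counit (R := k) (rh.right j) • (c ⊗ₜ[k] rh.left j) := by
        refine Finset.sum_congr rfl fun j _ => ?_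
        set L : H →ₗ[k] C ⊗[k] H :=
          ((TensorProduct.mk k C H).flip (rh.left j)) ∘ₗ act ∘ₗ TensorProduct.mk k C H c with hL
        have hLt : ∀ x : H, L x = act (c ⊗ₜ x) ⊗ₜ[k] rh.left j := by intro x; simp [hL]
        calc ∑ m ∈ (b j).index, act (c ⊗ₜ ((b j).right m * Sb ((b j).left m))) ⊗ₜ[k] rh.left j
            = ∑ m ∈ (b j).index, L ((b j).right m * Sb ((b j).left m)) := by simp only [hLt]
          _ = L (∑ m ∈ (b j).index, (b j).right m * Sb ((b j).left m)) := (map_sum L _ _).symm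
          _ = Coalgebra.counit (R := k) (rh.right j) • (c ⊗ₜ[k] rh.left j) := by
              rw [sum_mul_sbar_eq_smul hSb₁ hSb₂ (b j), map_smul, hLt, hact.1]
    _ = c ⊗ₜ[k] h := by
        have := sum_smul_counit_map (TensorProduct.mk k C H c) rh
        simpa using this

end TwistHelper


/-- Lemma 3.1: with `B = C/CH⁺`, `β(c ⊗ h) = c₁ ⊗ c₂·h` and
`β'(c ⊗ h) = c₁·h ⊗ c₂` (viewed as maps into `C □_B C`), if the antipode is
bijective then `β` is bijective (resp. injective, surjective) iff `β'` is; in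
fact `β' = β ∘ φ` where `φ(c ⊗ h) = c·h₁ ⊗ S(h₂)` is a bijection of `C ⊗ H`
with inverse `φ⁻¹(c ⊗ h) = c·h₂ ⊗ S̄(h₁)`. -/
theorem TwistPaper.beta_iff_beta'
    (act : C ⊗[k] H →ₗ[k] C) (hact : IsModuleCoalg k H C act)
    (Sb : H →ₗ[k] H)
    (hSb₁ : Sb ∘ₗ (HopfAlgebra.antipode k : H →ₗ[k] H) = LinearMap.id)
    (hSb₂ : (HopfAlgebra.antipode k : H →ₗ[k] H) ∘ₗ Sb = LinearMap.id)
    (hβ : ∀ x, betaMap k H C act x ∈ cotensor k H C act Coalgebra.comul)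
    (hβ' : ∀ x, betaMap' k H C act x ∈ cotensor k H C act Coalgebra.comul) :
    (Function.Bijective
        (LinearMap.codRestrict (cotensor k H C act Coalgebra.comul) (betaMap k H C act) hβ)
      ↔ Function.Bijective
        (LinearMap.codRestrict (cotensor k H C act Coalgebra.comul) (betaMap' k H C act) hβ')) ∧
    (Function.Injective
        (LinearMap.codRestrict (cotensor k H C act Coalgebra.comul) (betaMap k H C act) hβ)
      ↔ Function.Injective
        (LinearMap.codRestrict (cotensor k H C act Coalgebra.comul) (betaMap' k H C act) hβ')) ∧
    (Function.Surjective
        (LinearMap.codRestrict (cotensor k H C act Coalgebra.comul) (betaMap k H C act) hβ)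
      ↔ Function.Surjective
        (LinearMap.codRestrict (cotensor k H C act Coalgebra.comul) (betaMap' k H C act) hβ')) ∧
    betaMap' k H C act = betaMap k H C act ∘ₗ phiS k H C act ∧
    phiS k H C act ∘ₗ phiSInv k H C act Sb = LinearMap.id ∧
    phiSInv k H C act Sb ∘ₗ phiS k H C act = LinearMap.id := by
  have hφ := TwistHelper.beta'_eq_beta_comp_phiS hact
  have h1 := TwistHelper.phiS_comp_phiSInv hact hSb₁ hSb₂
  have h2 := TwistHelper.phiSInv_comp_phiS hact hSb₁ hSb₂
  set e : (C ⊗[k] H) ≃ₗ[k] (C ⊗[k] H) :=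
    LinearEquiv.ofLinear (phiS k H C act) (phiSInv k H C act Sb) h1 h2 with he
  have hfun : ⇑(LinearMap.codRestrict (cotensor k H C act Coalgebra.comul)
        (betaMap' k H C act) hβ')
      = ⇑(LinearMap.codRestrict (cotensor k H C act Coalgebra.comul)
          (betaMap k H C act) hβ) ∘ ⇑e.toEquiv := by
    funext x
    apply Subtype.ext
    simp only [LinearMap.codRestrict_apply, Function.comp_apply]
    have := LinearMap.congr_fun hφ x
    rw [LinearMap.comp_apply] at this
    rw [this]
    rfl
  refine ⟨?_, ?_, ?_, hφ, h1, h2⟩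
  · rw [hfun]; exact (Equiv.bijective_comp e.toEquiv _).symm
  · rw [hfun]; exact (Equiv.injective_comp e.toEquiv _).symm
  · rw [hfun]; exact (Equiv.surjective_comp e.toEquiv _).symm
end
end

section
/- Let C/B be an H-Galois coextension with translation-type map τ̄ = (ε ⊗ id) ∘ β^{-1} : C □_B C → H, written τ̄(c ⊗ d) = c ◊ d. Then for all c, d ∈ C and h ∈ H: (i) ε_H(c ◊ d) = ε_C(c)ε_C(d); (ii) (c ◊ d)h = c ◊ (d·h); (iii) (c·h) ◊ d = S(h)(c ◊ d); (iv) c₁·(c₂ ◊ d) = ε(c)d whenever c ⊗ d ∈ C □_B C. -/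
open TensorProduct LinearMap Coalgebra

noncomputable section

variable (k : Type) [Field k]
variable (H : Type) [Ring H] [HopfAlgebra k H]
variable (C : Type) [AddCommGroup C] [Module k C] [Coalgebra k C]

namespace TwistPaper

/-- The translation-type map `τ̄ = (ε ⊗ id) ∘ β⁻¹ : C □_B C → H`, given a linear
inverse `binv` of the canonical map `β`. -/
def tauBar (act : C ⊗[k] H →ₗ[k] C)
    (binv : cotensor k H C act Coalgebra.comul →ₗ[k] C ⊗[k] H) :
    cotensor k H C act Coalgebra.comul →ₗ[k] H :=
  (TensorProduct.lid k H).toLinearMap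
    ∘ₗ TensorProduct.map Coalgebra.counit LinearMap.id ∘ₗ binv

/-- Right action by a fixed `h : H`. -/
def rH (act : C ⊗[k] H →ₗ[k] C) (h : H) : C →ₗ[k] C :=
  act ∘ₗ (TensorProduct.mk k C H).flip h

end TwistPaper


namespace TwistPaper

section Helpers

variable {k H C}

/-- `E = (lid) ∘ (ε ⊗ id) : C ⊗ H → H`. -/
def Emap : C ⊗[k] H →ₗ[k] H :=
  (TensorProduct.lid k H).toLinearMap ∘ₗ TensorProduct.map Coalgebra.counit LinearMap.id

@[simp] lemma Emap_tmul (c : C) (h : H) :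
    Emap (c ⊗ₜ[k] h) = (Coalgebra.counit c : k) • h := by
  simp [Emap]

lemma repr_sum_smul {A : Type} [AddCommGroup A] [Module k A] [Coalgebra k A]
    {a : A} (R : Coalgebra.Repr k a (A × A)) :
    ∑ i ∈ R.index, (Coalgebra.counit (R.left i) : k) • R.right i = a := by
  have h := Coalgebra.sum_counit_tmul_eq (R := k) R
  rw [Finset.sum_congr rfl
      (fun i _ => (TensorProduct.lid_tmul (R := k) (M := A)
        (R.right i) (Coalgebra.counit (R.left i))).symm),
    ← map_sum, h]
  simp

lemma repr_sum_smul' {A : Type} [AddCommGroup A] [Module k A] [Coalgebra k A]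
    {a : A} (R : Coalgebra.Repr k a (A × A)) :
    ∑ i ∈ R.index, (Coalgebra.counit (R.right i) : k) • R.left i = a := by
  have h := Coalgebra.sum_tmul_counit_eq (R := k) R
  rw [Finset.sum_congr rfl
      (fun i _ => (TensorProduct.rid_tmul (R := k) (M := A)
        (R.left i) (Coalgebra.counit (R.right i))).symm),
    ← map_sum, h]
  simp

variable (act : C ⊗[k] H →ₗ[k] C)

lemma betaMap_tmul (c : C) (h : H) :
    betaMap k H C act (c ⊗ₜ[k] h)
      = TensorProduct.map LinearMap.id act
          ((TensorProduct.assoc k C C H) ((Coalgebra.comul c) ⊗ₜ[k] h)) := by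
  simp [betaMap]

lemma betaMap_repr (c : C) (h : H) (R : Coalgebra.Repr k c (C × C)) :
    betaMap k H C act (c ⊗ₜ[k] h)
      = ∑ i ∈ R.index, R.left i ⊗ₜ[k] act (R.right i ⊗ₜ[k] h) := by
  rw [betaMap_tmul, ← R.eq]
  simp [TensorProduct.sum_tmul, map_sum]

@[simp] lemma rH_apply (h : H) (c : C) : rH k H C act h c = act (c ⊗ₜ[k] h) := rfl

lemma act_counit (hact : IsModuleCoalg k H C act) (c : C) (h : H) :
    (Coalgebra.counit (act (c ⊗ₜ[k] h)) : k)
      = Coalgebra.counit c * Coalgebra.counit h := by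
  have := LinearMap.congr_fun hact.2.2.2 (c ⊗ₜ[k] h)
  simpa using this

lemma comul_act (hact : IsModuleCoalg k H C act) (c : C) (h : H) (Rc : Coalgebra.Repr k c (C × C)) (Rh : Coalgebra.Repr k h (H × H)) :
    Coalgebra.comul (act (c ⊗ₜ[k] h))
      = ∑ i ∈ Rc.index, ∑ j ∈ Rh.index,
          act (Rc.left i ⊗ₜ[k] Rh.left j) ⊗ₜ[k] act (Rc.right i ⊗ₜ[k] Rh.right j) := by
  have hc := LinearMap.congr_fun hact.2.2.1 (c ⊗ₜ[k] h)
  simp only [LinearMap.comp_apply, TensorProduct.map_tmul] at hc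
  rw [hc, ← Rc.eq, ← Rh.eq]
  simp only [TensorProduct.sum_tmul, TensorProduct.tmul_sum, map_sum,
    LinearEquiv.coe_coe, TensorProduct.tensorTensorTensorComm_tmul,
    TensorProduct.map_tmul]
  rw [Finset.sum_comm]

/-- Core computation for property (i). -/
lemma counit_Emap_beta (hact : IsModuleCoalg k H C act) (t : C ⊗[k] H) :
    (Coalgebra.counit : H →ₗ[k] k) (Emap t)
      = TensorProduct.lid k k
          (TensorProduct.map Coalgebra.counit Coalgebra.counit (betaMap k H C act t)) := by
  induction t with
  | zero => simp
  | add a b ha hb => simp only [map_add, ha, hb]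
  | tmul c h =>
    set R := ℛ k c with hR
    rw [betaMap_repr act c h R]
    have hc : ∑ i ∈ R.index,
        (Coalgebra.counit (R.left i) : k) * Coalgebra.counit (R.right i)
        = Coalgebra.counit c := by
      have := congrArg (Coalgebra.counit : C →ₗ[k] k) (repr_sum_smul R)
      simpa [map_sum, smul_eq_mul] using this
    simp only [map_sum, TensorProduct.map_tmul, Emap_tmul, map_smul, smul_eq_mul,
      TensorProduct.lid_tmul, act_counit act hact]
    rw [← hc, Finset.sum_mul]
    exact Finset.sum_congr rfl fun i _ => mul_assoc _ _ _

/-- Core computation for property (ii). -/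
lemma M2 (hact : IsModuleCoalg k H C act) (h : H) (t : C ⊗[k] H) :
    TensorProduct.map LinearMap.id (rH k H C act h) (betaMap k H C act t)
      = betaMap k H C act
          (TensorProduct.map LinearMap.id (LinearMap.mulRight k h) t) := by
  induction t with
  | zero => simp
  | add a b ha hb => simp only [map_add, ha, hb]
  | tmul c g =>
    set R := ℛ k c with hR
    rw [betaMap_repr act c g R]
    simp only [map_sum, TensorProduct.map_tmul, LinearMap.id_coe, id_eq,
      LinearMap.mulRight_apply, rH_apply]
    rw [betaMap_repr act c (g * h) R]
    exact Finset.sum_congr rfl fun i _ => by rw [hact.2.1]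

lemma E2 (h : H) (t : C ⊗[k] H) :
    Emap (TensorProduct.map LinearMap.id (LinearMap.mulRight k h) t) = Emap t * h := by
  induction t with
  | zero => simp
  | add a b ha hb => simp only [map_add, ha, hb, add_mul]
  | tmul c g => simp [smul_mul_assoc]

/-- Hopf identity: `∑ h₁ ⊗ h₂ S(h₃) = h ⊗ 1` (map form, pointwise). -/
lemma K1 (h : H) :
    LinearMap.lTensor H
        (LinearMap.mul' k H ∘ₗ LinearMap.lTensor H (HopfAlgebra.antipode (R := k)))
      (LinearMap.lTensor H Coalgebra.comul (Coalgebra.comul h)) = h ⊗ₜ[k] (1 : H) := by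
  rw [← LinearMap.comp_apply, ← LinearMap.lTensor_comp, LinearMap.comp_assoc,
    HopfAlgebra.mul_antipode_lTensor_comul, LinearMap.lTensor_comp, LinearMap.comp_apply,
    Coalgebra.lTensor_counit_comul]
  simp

set_option synthInstance.maxHeartbeats 1000000 in
/-- Hopf identity with explicit representations:
`∑ᵢⱼ (h₁ᵢ)₁ⱼ ⊗ (h₁ᵢ)₂ⱼ * S(h₂ᵢ) = h ⊗ 1`. -/
lemma K2 (h : H) (R1 : Coalgebra.Repr k h (H × H))
    (R2 : ∀ i : R1.ι, Coalgebra.Repr k (R1.left i) (H × H)) :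
    ∑ i ∈ R1.index, ∑ j ∈ (R2 i).index,
        (R2 i).left j ⊗ₜ[k] ((R2 i).right j * HopfAlgebra.antipode (R := k) (R1.right i))
      = h ⊗ₜ[k] (1 : H) := by
  have e1 : (LinearMap.rTensor H (Coalgebra.comul (R := k) (A := H))) (Coalgebra.comul h)
      = ∑ i ∈ R1.index, ∑ j ∈ (R2 i).index,
          ((R2 i).left j ⊗ₜ[k] (R2 i).right j) ⊗ₜ[k] R1.right i := by
    rw [← R1.eq]
    simp only [map_sum, LinearMap.rTensor_tmul]
    exact Finset.sum_congr rfl fun i _ => by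
      rw [← (R2 i).eq, TensorProduct.sum_tmul]
  set L : (H ⊗[k] H) ⊗[k] H →ₗ[k] H ⊗[k] H :=
    LinearMap.lTensor H (LinearMap.mul' k H)
      ∘ₗ (TensorProduct.assoc k H H H).toLinearMap
      ∘ₗ LinearMap.lTensor (H ⊗[k] H) (HopfAlgebra.antipode (R := k)) with hL
  have e2 : L ((LinearMap.rTensor H Coalgebra.comul) (Coalgebra.comul h))
      = ∑ i ∈ R1.index, ∑ j ∈ (R2 i).index,
          (R2 i).left j ⊗ₜ[k]
            ((R2 i).right j * HopfAlgebra.antipode (R := k) (R1.right i)) := by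
    rw [e1]
    simp [hL, map_sum]
  have e3 : (LinearMap.rTensor H (Coalgebra.comul (R := k) (A := H))) (Coalgebra.comul h)
      = (TensorProduct.assoc k H H H).symm
          (LinearMap.lTensor H Coalgebra.comul (Coalgebra.comul h)) :=
    (Coalgebra.coassoc_symm_apply h).symm
  have e4 : ∀ v : H ⊗[k] (H ⊗[k] H), L ((TensorProduct.assoc k H H H).symm v)
      = LinearMap.lTensor H
          (LinearMap.mul' k H ∘ₗ LinearMap.lTensor H (HopfAlgebra.antipode (R := k))) v := by
    intro v
    induction v with
    | zero => simp
    | add a b ha hb => simp only [map_add, ha, hb]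
    | tmul a w =>
      induction w with
      | zero => simp [TensorProduct.tmul_zero]
      | add a' b' ha' hb' => simp only [TensorProduct.tmul_add, map_add, ha', hb']
      | tmul b c => simp [hL]
  rw [← e2, e3, e4, K1]

/-- Core computation for property (iii). -/
lemma E3 (hact : IsModuleCoalg k H C act) (h : H) (R1 : Coalgebra.Repr k h (H × H))
    (t : C ⊗[k] H) :
    Emap (∑ i ∈ R1.index,
        TensorProduct.map (rH k H C act (R1.left i))
          (LinearMap.mulLeft k (HopfAlgebra.antipode (R := k) (R1.right i))) t)
      = HopfAlgebra.antipode (R := k) h * Emap t := by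
  have hS : ∑ i ∈ R1.index,
      (Coalgebra.counit (R1.left i) : k) • HopfAlgebra.antipode (R := k) (R1.right i)
      = HopfAlgebra.antipode (R := k) h := by
    have := congrArg (HopfAlgebra.antipode (R := k)) (repr_sum_smul R1)
    simpa [map_sum, map_smul] using this
  induction t with
  | zero => simp [mul_zero]
  | add a b ha hb =>
    simp only [map_add, Finset.sum_add_distrib] at *
    rw [ha, hb, mul_add]
  | tmul c g =>
    simp only [map_sum, TensorProduct.map_tmul, rH_apply, LinearMap.mulLeft_apply,
      Emap_tmul, act_counit act hact]
    have e : ∀ i ∈ R1.index, (Coalgebra.counit c * Coalgebra.counit (R1.left i) : k) •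
        (HopfAlgebra.antipode (R := k) (R1.right i) * g)
        = (Coalgebra.counit c : k) •
            (((Coalgebra.counit (R1.left i) : k) •
              HopfAlgebra.antipode (R := k) (R1.right i)) * g) := by
      intro i _
      rw [mul_smul, smul_mul_assoc]
    rw [Finset.sum_congr rfl e, ← Finset.smul_sum, ← Finset.sum_mul, hS, mul_smul_comm]

/-- Core computation for property (iii), main part. -/
lemma M3 (hact : IsModuleCoalg k H C act) (h : H) (R1 : Coalgebra.Repr k h (H × H))
    (t : C ⊗[k] H) :
    TensorProduct.map (rH k H C act h) LinearMap.id (betaMap k H C act t)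
      = betaMap k H C act
          (∑ i ∈ R1.index,
            TensorProduct.map (rH k H C act (R1.left i))
              (LinearMap.mulLeft k (HopfAlgebra.antipode (R := k) (R1.right i))) t) := by
  induction t with
  | zero => simp
  | add a b ha hb =>
    simp only [map_add, Finset.sum_add_distrib] at *
    rw [ha, hb]
  | tmul c g =>
    set Rc := ℛ k c with hRc
    set R2 : ∀ i : R1.ι, Coalgebra.Repr k (R1.left i) (H × H) := fun i => ℛ k (R1.left i) with hR2
    -- LHS
    rw [betaMap_repr act c g Rc]
    simp only [map_sum, TensorProduct.map_tmul, rH_apply, LinearMap.id_coe, id_eq,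
      LinearMap.mulLeft_apply]
    -- RHS: expand β on each summand
    rw [Finset.sum_congr rfl (fun i _ => betaMap_tmul act
      (act (c ⊗ₜ[k] R1.left i)) (HopfAlgebra.antipode (R := k) (R1.right i) * g))]
    have hrhs : ∀ i ∈ R1.index,
        (TensorProduct.map LinearMap.id act) ((TensorProduct.assoc k C C H)
          (Coalgebra.comul (act (c ⊗ₜ[k] R1.left i)) ⊗ₜ[k]
            (HopfAlgebra.antipode (R := k) (R1.right i) * g)))
        = ∑ m ∈ Rc.index, ∑ j ∈ (R2 i).index,
            act (Rc.left m ⊗ₜ[k] (R2 i).left j) ⊗ₜ[k]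
              act (Rc.right m ⊗ₜ[k] ((R2 i).right j *
                (HopfAlgebra.antipode (R := k) (R1.right i) * g))) := by
      intro i _
      rw [comul_act act hact c (R1.left i) Rc (R2 i)]
      simp only [TensorProduct.sum_tmul, map_sum, TensorProduct.assoc_tmul,
        TensorProduct.map_tmul, LinearMap.id_coe, id_eq]
      exact Finset.sum_congr rfl fun m _ => Finset.sum_congr rfl fun j _ => by
        rw [hact.2.1]
    rw [Finset.sum_congr rfl hrhs, Finset.sum_comm]
    refine Finset.sum_congr rfl fun m _ => ?_
    set F : H ⊗[k] H →ₗ[k] C ⊗[k] C :=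
      TensorProduct.map (act ∘ₗ TensorProduct.mk k C H (Rc.left m))
        (act ∘ₗ (TensorProduct.mk k C H (Rc.right m)) ∘ₗ LinearMap.mulRight k g) with hF
    have hFt : ∀ (a b : H), F (a ⊗ₜ[k] b)
        = act (Rc.left m ⊗ₜ[k] a) ⊗ₜ[k] act (Rc.right m ⊗ₜ[k] (b * g)) := by
      intro a b; simp [hF]
    calc act (Rc.left m ⊗ₜ[k] h) ⊗ₜ[k] act (Rc.right m ⊗ₜ[k] g)
        = F (h ⊗ₜ[k] (1 : H)) := by rw [hFt, one_mul]
      _ = F (∑ i ∈ R1.index, ∑ j ∈ (R2 i).index, (R2 i).left j ⊗ₜ[k]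
            ((R2 i).right j * HopfAlgebra.antipode (R := k) (R1.right i))) := by
          rw [K2 h R1 R2]
      _ = ∑ i ∈ R1.index, ∑ j ∈ (R2 i).index,
            act (Rc.left m ⊗ₜ[k] (R2 i).left j) ⊗ₜ[k]
              act (Rc.right m ⊗ₜ[k] ((R2 i).right j *
                (HopfAlgebra.antipode (R := k) (R1.right i) * g))) := by
          rw [map_sum]
          exact Finset.sum_congr rfl fun i _ => by
            rw [map_sum]
            exact Finset.sum_congr rfl fun j _ => by rw [hFt, mul_assoc]

/-- Core computation for property (iv), coassociativity transport. -/
lemma M4 (t : C ⊗[k] H) :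
    TensorProduct.map LinearMap.id (betaMap k H C act)
        ((TensorProduct.assoc k C C H) (TensorProduct.map Coalgebra.comul LinearMap.id t))
      = (TensorProduct.assoc k C C C)
          (TensorProduct.map Coalgebra.comul LinearMap.id (betaMap k H C act t)) := by
  induction t with
  | zero => simp
  | add a b ha hb => simp only [map_add, ha, hb]
  | tmul c h =>
    set Rc := ℛ k c with hRc
    set inner : C ⊗[k] C →ₗ[k] C ⊗[k] C :=
      TensorProduct.map LinearMap.id act
        ∘ₗ (TensorProduct.assoc k C C H).toLinearMap
        ∘ₗ (TensorProduct.mk k (C ⊗[k] C) H).flip h with hinner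
    have hβin : ∀ q : C, betaMap k H C act (q ⊗ₜ[k] h) = inner (Coalgebra.comul q) := by
      intro q
      rw [betaMap_tmul]
      simp [hinner]
    have hco := Coalgebra.coassoc_apply (R := k) c
    -- LHS = G (lTensor comul (comul c)) with G := lTensor C inner
    have lhs_eq : TensorProduct.map LinearMap.id (betaMap k H C act)
        ((TensorProduct.assoc k C C H) (TensorProduct.map Coalgebra.comul LinearMap.id
          (c ⊗ₜ[k] h)))
        = LinearMap.lTensor C inner (LinearMap.lTensor C Coalgebra.comul
            (Coalgebra.comul c)) := by
      simp only [TensorProduct.map_tmul, LinearMap.id_coe, id_eq]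
      rw [← Rc.eq]
      simp only [TensorProduct.sum_tmul, map_sum, TensorProduct.assoc_tmul,
        LinearMap.lTensor_tmul]
      exact Finset.sum_congr rfl fun m _ => by
        simp only [TensorProduct.map_tmul, LinearMap.id_coe, id_eq]
        rw [hβin]
    rw [lhs_eq, ← hco]
    -- now compute G (assoc (rTensor comul (comul c)))
    rw [betaMap_repr act c h Rc, ← Rc.eq]
    simp only [map_sum, LinearMap.rTensor_tmul, TensorProduct.map_tmul, LinearMap.id_coe,
      id_eq]
    refine Finset.sum_congr rfl fun m _ => ?_
    -- goal: lTensor C inner (assoc (comul (left m) ⊗ₜ right m))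
    --     = assoc (comul (left m) ⊗ₜ act (right m ⊗ₜ h))
    generalize Coalgebra.comul (R := k) (Rc.left m) = v
    induction v with
    | zero => simp
    | add a b ha hb => simp only [TensorProduct.add_tmul, map_add, ha, hb]
    | tmul p q => simp [hinner]

/-- Core computation for property (iv), final step. -/
lemma M5 (hact : IsModuleCoalg k H C act) (t : C ⊗[k] H) :
    act (TensorProduct.map LinearMap.id Emap
        ((TensorProduct.assoc k C C H) (TensorProduct.map Coalgebra.comul LinearMap.id t)))
      = TensorProduct.lid k C
          (TensorProduct.map Coalgebra.counit LinearMap.id (betaMap k H C act t)) := by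
  induction t with
  | zero => simp
  | add a b ha hb => simp only [map_add, ha, hb]
  | tmul c h =>
    set Rc := ℛ k c with hRc
    rw [betaMap_repr act c h Rc]
    have h1 : (TensorProduct.assoc k C C H) (TensorProduct.map Coalgebra.comul LinearMap.id
        (c ⊗ₜ[k] h)) = ∑ m ∈ Rc.index, Rc.left m ⊗ₜ[k] (Rc.right m ⊗ₜ[k] h) := by
      simp only [TensorProduct.map_tmul, LinearMap.id_coe, id_eq]
      rw [← Rc.eq]
      simp [TensorProduct.sum_tmul, map_sum]
    rw [h1]
    simp only [map_sum, TensorProduct.map_tmul, LinearMap.id_coe, id_eq, Emap_tmul,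
      TensorProduct.lid_tmul, TensorProduct.tmul_smul, map_smul]
    have e1 : ∀ (s : k) (p : C), s • act (p ⊗ₜ[k] h) = act ((s • p) ⊗ₜ[k] h) := by
      intro s p; rw [← map_smul, TensorProduct.smul_tmul']
    rw [Finset.sum_congr rfl fun x _ => e1 _ _, Finset.sum_congr rfl fun x _ => e1 _ _,
      ← map_sum, ← map_sum, ← TensorProduct.sum_tmul, ← TensorProduct.sum_tmul,
      repr_sum_smul' Rc, repr_sum_smul Rc]

end Helpers

end TwistPaper

/-- properties (23)–(26) of the translation-type map
`τ̄(c ⊗ d) = c ◊ d` of an `H`-Galois coextension `C/B`: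
(i) `ε(c ◊ d) = ε(c)ε(d)`; (ii) `(c ◊ d)h = c ◊ (d·h)`;
(iii) `(c·h) ◊ d = S(h)(c ◊ d)`; (iv) `c₁·(c₂ ◊ d) = ε(c)d`. -/
theorem TwistPaper.tauBar_properties
    (act : C ⊗[k] H →ₗ[k] C) (hact : IsModuleCoalg k H C act)
    (hβ : ∀ x, betaMap k H C act x ∈ cotensor k H C act Coalgebra.comul)
    (binv : cotensor k H C act Coalgebra.comul →ₗ[k] C ⊗[k] H)
    (hb₁ : LinearMap.codRestrict (cotensor k H C act Coalgebra.comul)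
        (betaMap k H C act) hβ ∘ₗ binv = LinearMap.id)
    (hb₂ : binv ∘ₗ LinearMap.codRestrict (cotensor k H C act Coalgebra.comul)
        (betaMap k H C act) hβ = LinearMap.id) :
    -- (i) ε_H(c ◊ d) = ε_C(c)ε_C(d)
    (∀ x : cotensor k H C act Coalgebra.comul,
      (Coalgebra.counit : H →ₗ[k] k) (tauBar k H C act binv x)
        = (TensorProduct.lid k k)
            (TensorProduct.map Coalgebra.counit Coalgebra.counit x.1)) ∧
    -- (ii) (c ◊ d)h = c ◊ (d·h)
    (∀ (x y : cotensor k H C act Coalgebra.comul) (h : H),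
      y.1 = TensorProduct.map LinearMap.id (rH k H C act h) x.1 →
      tauBar k H C act binv y = tauBar k H C act binv x * h) ∧
    -- (iii) (c·h) ◊ d = S(h)(c ◊ d)
    (∀ (x y : cotensor k H C act Coalgebra.comul) (h : H),
      y.1 = TensorProduct.map (rH k H C act h) LinearMap.id x.1 →
      tauBar k H C act binv y
        = (HopfAlgebra.antipode k : H →ₗ[k] H) h * tauBar k H C act binv x) ∧
    -- (iv) c₁·(c₂ ◊ d) = ε(c)d whenever c ⊗ d ∈ C □_B C
    (∀ (x : cotensor k H C act Coalgebra.comul)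
       (y : C ⊗[k] (cotensor k H C act Coalgebra.comul)),
      TensorProduct.map LinearMap.id (cotensor k H C act Coalgebra.comul).subtype y
          = (TensorProduct.assoc k C C C)
              (TensorProduct.map Coalgebra.comul LinearMap.id x.1) →
      act (TensorProduct.map LinearMap.id (tauBar k H C act binv) y)
        = (TensorProduct.lid k C)
            (TensorProduct.map Coalgebra.counit LinearMap.id x.1)) := by
  have hval : ∀ x : cotensor k H C act Coalgebra.comul,
      betaMap k H C act (binv x) = x.1 := fun x =>
    congrArg Subtype.val (LinearMap.congr_fun hb₁ x)
  have hbinv : ∀ t : C ⊗[k] H,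
      binv ⟨betaMap k H C act t, hβ t⟩ = t := fun t => LinearMap.congr_fun hb₂ t
  have htau : ∀ x, tauBar k H C act binv x = Emap (binv x) := fun _ => rfl
  refine ⟨?_, ?_, ?_, ?_⟩
  · -- (i)
    intro x
    rw [htau, ← hval x]
    exact counit_Emap_beta act hact (binv x)
  · -- (ii)
    intro x y h hxy
    set t₂ : C ⊗[k] H :=
      TensorProduct.map LinearMap.id (LinearMap.mulRight k h) (binv x) with ht₂
    have ht' : y.1 = betaMap k H C act t₂ := by
      rw [hxy, ← hval x, M2 act hact h, ht₂]
    have hy : y = ⟨betaMap k H C act t₂, hβ t₂⟩ := Subtype.ext ht'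
    have hb : binv y = t₂ := by rw [hy]; exact hbinv t₂
    rw [htau, htau, hb, ht₂, E2]
  · -- (iii)
    intro x y h hxy
    set R1 := ℛ k h with hR1
    set t₃ : C ⊗[k] H := ∑ i ∈ R1.index,
        TensorProduct.map (rH k H C act (R1.left i))
          (LinearMap.mulLeft k (HopfAlgebra.antipode (R := k) (R1.right i))) (binv x)
      with ht₃
    have ht' : y.1 = betaMap k H C act t₃ := by
      rw [hxy, ← hval x, M3 act hact h R1, ht₃]
    have hy : y = ⟨betaMap k H C act t₃, hβ t₃⟩ := Subtype.ext ht'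
    have hb : binv y = t₃ := by rw [hy]; exact hbinv t₃
    rw [htau, htau, hb, ht₃, E3 act hact h R1]
  · -- (iv)
    intro x y hy
    set w : C ⊗[k] (cotensor k H C act Coalgebra.comul) :=
      TensorProduct.map LinearMap.id
        (LinearMap.codRestrict (cotensor k H C act Coalgebra.comul) (betaMap k H C act) hβ)
        ((TensorProduct.assoc k C C H)
          (TensorProduct.map Coalgebra.comul LinearMap.id (binv x))) with hw
    have h1 : TensorProduct.map LinearMap.id
        (cotensor k H C act Coalgebra.comul).subtype w
        = (TensorProduct.assoc k C C C)
            (TensorProduct.map Coalgebra.comul LinearMap.id x.1) := by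
      rw [hw, ← LinearMap.comp_apply, ← TensorProduct.map_comp,
        LinearMap.subtype_comp_codRestrict, LinearMap.id_comp, M4 act, hval x]
    have hinj : Function.Injective
        (TensorProduct.map (LinearMap.id : C →ₗ[k] C)
          (cotensor k H C act Coalgebra.comul).subtype) := by
      have := Module.Flat.lTensor_preserves_injective_linearMap (M := C)
        ((cotensor k H C act Coalgebra.comul).subtype) (Submodule.injective_subtype _)
      simpa [LinearMap.lTensor] using this
    have hyw : y = w := hinj (hy.trans h1.symm)
    have h2 : ∀ v : C ⊗[k] (C ⊗[k] H),
        TensorProduct.map LinearMap.id (tauBar k H C act binv)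
          (TensorProduct.map LinearMap.id
            (LinearMap.codRestrict (cotensor k H C act Coalgebra.comul)
              (betaMap k H C act) hβ) v)
        = TensorProduct.map LinearMap.id Emap v := by
      intro v
      induction v with
      | zero => simp
      | add a b ha hb' => simp only [map_add, ha, hb']
      | tmul c t =>
        simp only [TensorProduct.map_tmul, LinearMap.id_coe, id_eq]
        congr 1
        exact congrArg Emap (LinearMap.congr_fun hb₂ t)
    rw [hyw, hw, h2, M5 act hact, hval x]
end
end
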